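/- arXiv:2406.16392 — 5 statements merged into one kernel-verified Lean document; each statement's English description precedes it below -/
import Mathlib

section
/- Let π be a permutation of [n] and let I be an interval of π. Then the number of direct descendants of I in the interval poset of π (that is, the number of intervals J of π with J ⊊ I such that no interval K of π satisfies J ⊊ K ⊊ I) is never exactly 3. -/
/-- `π` is (the extension by identity-like behavior of) a permutation of `[1,n]`:
it maps the set `{1,…,n}` into (hence onto) itself. -/
def PermOn (n : ℕ) (π : Equiv.Perm ℕ) : Prop :=
  ∀ v ∈ Finset.Icc 1 n, π v ∈ Finset.Icc 1 n

/-- `[a,b]` is an interval (block) of the permutation `π` of `[1,n]`: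
`1 ≤ a ≤ b ≤ n` and the set of positions `{π⁻¹ v : a ≤ v ≤ b}` is a set of
consecutive integers. -/
def IsBlock (n : ℕ) (π : Equiv.Perm ℕ) (a b : ℕ) : Prop :=
  1 ≤ a ∧ a ≤ b ∧ b ≤ n ∧ ∃ c d : ℕ, (Finset.Icc a b).image π.symm = Finset.Icc c d

/-- A finite set `I ⊆ ℕ` is an interval of `π` if it is of the form `[a,b]`
for some block `[a,b]` of `π`. -/
def IsIntervalSet (n : ℕ) (π : Equiv.Perm ℕ) (I : Finset ℕ) : Prop :=
  ∃ a b : ℕ, I = Finset.Icc a b ∧ IsBlock n π a b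

/-!
The intervals of `π` are the nonempty subsets `J ⊆ [1, n]` such that both `J` and its set of
positions `π⁻¹ J` are order-connected, so the union of two overlapping intervals is an interval.
Hence two overlapping direct descendants of `I` have union `I`, and a third one would have to
overlap both of them; then one of the three contains both endpoints of `I`, which is absurd.
Otherwise the direct descendants are pairwise disjoint and, singletons being intervals, they
cover `I`. Three disjoint blocks covering `I` are consecutive both in values and in positions;
the middle block in values is adjacent to the other two, and so is the middle block in
positions, so two of the three blocks are adjacent in both senses. Their union is then an
interval lying strictly between one of them and `I`.
-/

namespace Set

variable {α : Type*} [LinearOrder α] {A B C : Set α}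

theorem OrdConnected.union_of_inter_nonempty (hA : A.OrdConnected) (hB : B.OrdConnected)
    (hAB : (A ∩ B).Nonempty) : (A ∪ B).OrdConnected := by
  obtain ⟨x, hxA, hxB⟩ := hAB
  refine ⟨fun p hp r hr q hq => ?_⟩
  rcases le_total q x with hqx | hxq
  · rcases hp with hp | hp
    exacts [Or.inl (hA.out hp hxA ⟨hq.1, hqx⟩), Or.inr (hB.out hp hxB ⟨hq.1, hqx⟩)]
  · rcases hr with hr | hr
    exacts [Or.inl (hA.out hxA hr ⟨hxq, hq.2⟩), Or.inr (hB.out hxB hr ⟨hxq, hq.2⟩)]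

theorem OrdConnected.forall_lt_of_disjoint (hA : A.OrdConnected) (hB : B.OrdConnected)
    (hAB : Disjoint A B) {a b : α} (ha : a ∈ A) (hb : b ∈ B) (hab : a < b) :
    ∀ a' ∈ A, ∀ b' ∈ B, a' < b' := by
  intro a' ha' b' hb'
  by_contra! h
  rcases le_total a b' with hab' | hb'a
  · exact hAB.notMem_of_mem_left (hA.out ha ha' ⟨hab', h⟩) hb'
  · exact hAB.notMem_of_mem_left ha (hB.out hb' hb ⟨hb'a, hab.le⟩)

theorem OrdConnected.union_of_forall_lt_of_forall_lt (hABC : (A ∪ B ∪ C).OrdConnected)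
    (hC : C.Nonempty) (hAC : ∀ a ∈ A, ∀ c ∈ C, a < c) (hCB : ∀ c ∈ C, ∀ b ∈ B, c < b) :
    (A ∪ C).OrdConnected ∧ (B ∪ C).OrdConnected := by
  obtain ⟨c, hc⟩ := hC
  have hACsub : A ∪ C ⊆ A ∪ B ∪ C := union_subset_union_left C subset_union_left
  have hBCsub : B ∪ C ⊆ A ∪ B ∪ C := union_subset_union_left C subset_union_right
  have hAB : ∀ a ∈ A, ∀ b ∈ B, a < b := fun a ha b hb => (hAC a ha c hc).trans (hCB c hc b hb)
  constructor
  · refine ⟨fun p hp r hr q hq => ?_⟩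
    rcases hABC.out (hACsub hp) (hACsub hr) hq with (hqA | hqB) | hqC
    · exact Or.inl hqA
    · have : r < q := hr.elim (hAB r · q hqB) (hCB r · q hqB)
      exact absurd hq.2 this.not_ge
    · exact Or.inr hqC
  · refine ⟨fun p hp r hr q hq => ?_⟩
    rcases hABC.out (hBCsub hp) (hBCsub hr) hq with (hqA | hqB) | hqC
    · have : q < p := hp.elim (hAB q hqA p ·) (hAC q hqA p ·)
      exact absurd hq.1 this.not_ge
    · exact Or.inl hqB
    · exact Or.inr hqC

theorem OrdConnected.union_of_not_ordConnected_union (hA : A.OrdConnected)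
    (hB : B.OrdConnected) (hC : C.OrdConnected) (hABC : (A ∪ B ∪ C).OrdConnected)
    (hAC : Disjoint A C) (hBC : Disjoint B C) (h : ¬(A ∪ B).OrdConnected) :
    (A ∪ C).OrdConnected ∧ (B ∪ C).OrdConnected := by
  simp only [ordConnected_iff, not_forall, Set.not_subset] at h
  obtain ⟨x, hx, z, hz, -, y, hy, hyAB⟩ := h
  have hyC : y ∈ C := (hABC.out (Or.inl hx) (Or.inl hz) hy).resolve_left hyAB
  have hxy : x < y := hy.1.lt_of_ne (ne_of_mem_of_not_mem hx hyAB)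
  have hyz : y < z := hy.2.lt_of_ne (ne_of_mem_of_not_mem hz hyAB).symm
  rcases hx with hxA | hxB <;> rcases hz with hzA | hzB
  · exact absurd (Or.inl (hA.out hxA hzA hy)) hyAB
  · exact hABC.union_of_forall_lt_of_forall_lt ⟨y, hyC⟩
      (hA.forall_lt_of_disjoint hC hAC hxA hyC hxy)
      (hC.forall_lt_of_disjoint hB hBC.symm hyC hzB hyz)
  · exact (((union_comm A B) ▸ hABC).union_of_forall_lt_of_forall_lt ⟨y, hyC⟩
      (hB.forall_lt_of_disjoint hC hBC hxB hyC hxy)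
      (hC.forall_lt_of_disjoint hA hAC.symm hyC hzA hyz)).symm
  · exact absurd (Or.inr (hB.out hxB hzB hy)) hyAB

theorem OrdConnected.two_unions_of_pairwise_disjoint (hA : A.OrdConnected)
    (hB : B.OrdConnected) (hC : C.OrdConnected) (hABC : (A ∪ B ∪ C).OrdConnected)
    (hAB : Disjoint A B) (hAC : Disjoint A C) (hBC : Disjoint B C) :
    ((A ∪ B).OrdConnected ∧ (A ∪ C).OrdConnected) ∨
      ((A ∪ B).OrdConnected ∧ (B ∪ C).OrdConnected) ∨
      ((A ∪ C).OrdConnected ∧ (B ∪ C).OrdConnected) := by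
  have hACB : (A ∪ C ∪ B).OrdConnected := union_right_comm A B C ▸ hABC
  by_cases hAB' : (A ∪ B).OrdConnected
  · by_cases hAC' : (A ∪ C).OrdConnected
    · exact Or.inl ⟨hAB', hAC'⟩
    · have := hA.union_of_not_ordConnected_union hC hB hACB hAB hBC.symm hAC'
      exact Or.inr (Or.inl ⟨hAB', union_comm C B ▸ this.2⟩)
  · exact Or.inr (Or.inr (hA.union_of_not_ordConnected_union hB hC hABC hAC hBC hAB'))

end Set

namespace Finset

variable {α β : Type*} [LinearOrder α]

theorem Nonempty.exists_eq_Icc_iff_ordConnected [LocallyFiniteOrder α] {s : Finset α}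
    (hs : s.Nonempty) : (∃ a b, s = Icc a b) ↔ (s : Set α).OrdConnected := by
  refine ⟨fun ⟨a, b, h⟩ => h ▸ coe_Icc a b ▸ Set.ordConnected_Icc, fun h => ?_⟩
  refine ⟨s.min' hs, s.max' hs, subset_antisymm (fun x hx => ?_) fun x hx => ?_⟩
  · exact mem_Icc.mpr ⟨s.min'_le x hx, s.le_max' x hx⟩
  · exact h.out (s.min'_mem hs) (s.max'_mem hs) (mem_Icc.mp hx)

theorem exists_eq_of_union_eq {I J₁ J₂ J₃ : Finset α} (h₁ : (J₁ : Set α).OrdConnected)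
    (h₂ : (J₂ : Set α).OrdConnected) (h₃ : (J₃ : Set α).OrdConnected)
    (h₁₂ : J₁ ∪ J₂ = I) (h₁₃ : J₁ ∪ J₃ = I) (h₂₃ : J₂ ∪ J₃ = I) :
    J₁ = I ∨ J₂ = I ∨ J₃ = I := by
  rcases I.eq_empty_or_nonempty with rfl | hI
  · exact Or.inl (union_eq_empty.mp h₁₂).1
  -- Each endpoint of `I` is missed by at most one `Jᵢ`, so some `Jᵢ` contains both.
  have eq_of_ends_mem : ∀ J : Finset α, (J : Set α).OrdConnected → J ⊆ I →
      I.min' hI ∈ J → I.max' hI ∈ J → J = I := fun J hJ hJI hmin hmax =>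
    subset_antisymm hJI fun x hx => hJ.out hmin hmax ⟨I.min'_le x hx, I.le_max' x hx⟩
  have hmem : ∀ x ∈ I, (x ∈ J₁ ∨ x ∈ J₂) ∧ (x ∈ J₁ ∨ x ∈ J₃) ∧ (x ∈ J₂ ∨ x ∈ J₃) := by
    simp only [← mem_union, h₁₂, h₁₃, h₂₃]
    exact fun x hx => ⟨hx, hx, hx⟩
  have := eq_of_ends_mem J₁ h₁ (h₁₂ ▸ subset_union_left)
  have := eq_of_ends_mem J₂ h₂ (h₁₂ ▸ subset_union_right)
  have := eq_of_ends_mem J₃ h₃ (h₁₃ ▸ subset_union_right)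
  have := hmem _ (I.min'_mem hI)
  have := hmem _ (I.max'_mem hI)
  grind

theorem ssubset_union_of_disjoint [DecidableEq β] {s t : Finset β} (ht : t.Nonempty)
    (hst : Disjoint s t) : s ⊂ s ∪ t :=
  left_lt_sup.mpr fun h => ht.ne_empty (hst.symm.eq_bot_of_le h)

end Finset

def IsDirectDescendant (n : ℕ) (π : Equiv.Perm ℕ) (I J : Finset ℕ) : Prop :=
  IsIntervalSet n π J ∧ J ⊂ I ∧ ¬∃ K : Finset ℕ, IsIntervalSet n π K ∧ J ⊂ K ∧ K ⊂ I

section Intervals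

variable {n : ℕ} {π : Equiv.Perm ℕ} {I J K L : Finset ℕ}

theorem isIntervalSet_iff : IsIntervalSet n π J ↔ J.Nonempty ∧ J ⊆ Finset.Icc 1 n ∧
    (J : Set ℕ).OrdConnected ∧ (π.symm '' J).OrdConnected := by
  constructor
  · rintro ⟨a, b, rfl, ha, hab, hb, c, d, hcd⟩
    refine ⟨Finset.nonempty_Icc.mpr hab, Finset.Icc_subset_Icc ha hb, ?_, ?_⟩
    · rw [Finset.coe_Icc]
      exact Set.ordConnected_Icc
    · rw [← Finset.coe_image, hcd, Finset.coe_Icc]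
      exact Set.ordConnected_Icc
  · rintro ⟨hJ, hJn, hval, hpos⟩
    obtain ⟨a, b, rfl⟩ := hJ.exists_eq_Icc_iff_ordConnected.mpr hval
    have hab : a ≤ b := Finset.nonempty_Icc.mp hJ
    refine ⟨a, b, rfl, (Finset.mem_Icc.mp (hJn (Finset.left_mem_Icc.mpr hab))).1, hab,
      (Finset.mem_Icc.mp (hJn (Finset.right_mem_Icc.mpr hab))).2, ?_⟩
    exact (hJ.image π.symm).exists_eq_Icc_iff_ordConnected.mpr (by rwa [Finset.coe_image])

theorem IsIntervalSet.nonempty (hJ : IsIntervalSet n π J) : J.Nonempty :=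
  (isIntervalSet_iff.mp hJ).1

theorem IsIntervalSet.ordConnected (hJ : IsIntervalSet n π J) : (J : Set ℕ).OrdConnected :=
  (isIntervalSet_iff.mp hJ).2.2.1

theorem IsIntervalSet.ordConnected_image (hJ : IsIntervalSet n π J) :
    (π.symm '' J).OrdConnected :=
  (isIntervalSet_iff.mp hJ).2.2.2

theorem IsIntervalSet.subset_Icc (hJ : IsIntervalSet n π J) : J ⊆ Finset.Icc 1 n :=
  (isIntervalSet_iff.mp hJ).2.1

theorem isIntervalSet_singleton {v : ℕ} (hv : v ∈ Finset.Icc 1 n) :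
    IsIntervalSet n π {v} := by
  refine isIntervalSet_iff.mpr ⟨Finset.singleton_nonempty v, Finset.singleton_subset_iff.mpr hv,
    ?_, ?_⟩ <;> simp [Set.ordConnected_singleton]

theorem IsIntervalSet.union (hJ : IsIntervalSet n π J) (hK : IsIntervalSet n π K)
    (hval : ((J : Set ℕ) ∪ K).OrdConnected) (hpos : (π.symm '' J ∪ π.symm '' K).OrdConnected) :
    IsIntervalSet n π (J ∪ K) := by
  refine isIntervalSet_iff.mpr ⟨hJ.nonempty.mono Finset.subset_union_left,
    Finset.union_subset hJ.subset_Icc hK.subset_Icc, ?_, ?_⟩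
  · rwa [Finset.coe_union]
  · rwa [Finset.coe_union, Set.image_union]

theorem IsIntervalSet.union_of_not_disjoint (hJ : IsIntervalSet n π J)
    (hK : IsIntervalSet n π K) (hJK : ¬Disjoint J K) : IsIntervalSet n π (J ∪ K) := by
  have hval : ((J : Set ℕ) ∩ K).Nonempty := by
    rw [← Finset.coe_inter]
    exact Finset.coe_nonempty.mpr (Finset.not_disjoint_iff_nonempty_inter.mp hJK)
  refine hJ.union hK (hJ.ordConnected.union_of_inter_nonempty hK.ordConnected hval) ?_
  refine hJ.ordConnected_image.union_of_inter_nonempty hK.ordConnected_image ?_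
  rw [← Set.image_inter π.symm.injective]
  exact hval.image _

theorem IsIntervalSet.exists_isDirectDescendant_superset (hJ : IsIntervalSet n π J)
    (hJI : J ⊂ I) : ∃ M, IsDirectDescendant n π I M ∧ J ⊆ M := by
  have hfin : {K | IsIntervalSet n π K ∧ K ⊂ I}.Finite :=
    I.powerset.finite_toSet.subset fun K hK => Finset.mem_powerset.mpr hK.2.subset
  obtain ⟨M, hJM, hM⟩ := hfin.exists_le_maximal ⟨hJ, hJI⟩
  exact ⟨M, ⟨hM.prop.1, hM.prop.2, fun ⟨K, hK, hMK, hKI⟩ =>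
    hMK.not_subset (hM.2 ⟨hK, hKI⟩ hMK.subset)⟩, hJM⟩

theorem IsDirectDescendant.exists_isDirectDescendant_mem (hI : IsIntervalSet n π I)
    (hJ : IsDirectDescendant n π I J) {v : ℕ} (hv : v ∈ I) :
    ∃ K, IsDirectDescendant n π I K ∧ v ∈ K := by
  have hvI : {v} ⊂ I := by
    refine Finset.ssubset_iff_subset_ne.mpr ⟨Finset.singleton_subset_iff.mpr hv, ?_⟩
    rintro rfl
    exact hJ.1.nonempty.ne_empty (Finset.ssubset_singleton_iff.mp hJ.2.1)
  obtain ⟨K, hK, hvK⟩ :=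
    (isIntervalSet_singleton (hI.subset_Icc hv)).exists_isDirectDescendant_superset hvI
  exact ⟨K, hK, Finset.singleton_subset_iff.mp hvK⟩

theorem IsDirectDescendant.not_subset (hJ : IsDirectDescendant n π I J)
    (hK : IsDirectDescendant n π I K) (hJK : J ≠ K) : ¬J ⊆ K := fun h =>
  hJ.2.2 ⟨K, hK.1, Finset.ssubset_iff_subset_ne.mpr ⟨h, hJK⟩, hK.2.1⟩

theorem IsDirectDescendant.union_eq_of_not_disjoint (hJ : IsDirectDescendant n π I J)
    (hK : IsDirectDescendant n π I K) (hJK : J ≠ K) (hdisj : ¬Disjoint J K) : J ∪ K = I := by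
  by_contra hne
  refine hJ.2.2 ⟨J ∪ K, hJ.1.union_of_not_disjoint hK.1 hdisj, ?_, ?_⟩
  · exact Finset.ssubset_iff_subset_ne.mpr ⟨Finset.subset_union_left, fun h =>
      hK.not_subset hJ hJK.symm (Finset.union_eq_left.mp h.symm)⟩
  · exact Finset.ssubset_iff_subset_ne.mpr ⟨Finset.union_subset hJ.2.1.subset hK.2.1.subset, hne⟩

theorem IsDirectDescendant.disjoint_of_ne (h₁ : IsDirectDescendant n π I J)
    (h₂ : IsDirectDescendant n π I K) (h₃ : IsDirectDescendant n π I L)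
    (h₁₂ : J ≠ K) (h₁₃ : J ≠ L) (h₂₃ : K ≠ L) : Disjoint J K := by
  by_contra hJK
  have hJKI := h₁.union_eq_of_not_disjoint h₂ h₁₂ hJK
  have hLI : L ⊆ J ∪ K := hJKI ▸ h₃.2.1.subset
  have hLK : ¬Disjoint L K := fun hd =>
    h₃.not_subset h₁ h₁₃.symm (hd.left_le_of_le_sup_right hLI)
  have hLJ : ¬Disjoint L J := fun hd =>
    h₃.not_subset h₂ h₂₃.symm (hd.left_le_of_le_sup_left hLI)
  have hJLI := h₁.union_eq_of_not_disjoint h₃ h₁₃ fun hd => hLJ hd.symm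
  have hKLI := h₂.union_eq_of_not_disjoint h₃ h₂₃ fun hd => hLK hd.symm
  rcases Finset.exists_eq_of_union_eq h₁.1.ordConnected h₂.1.ordConnected h₃.1.ordConnected
    hJKI hJLI hKLI with h | h | h
  exacts [h₁.2.1.ne h, h₂.2.1.ne h, h₃.2.1.ne h]

theorem IsDirectDescendant.not_isIntervalSet_union (hJ : IsDirectDescendant n π I J)
    (hK : K.Nonempty) (hL : L.Nonempty) (hJK : Disjoint J K) (hJKL : Disjoint (J ∪ K) L)
    (hI : J ∪ K ∪ L = I) : ¬IsIntervalSet n π (J ∪ K) := by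
  exact fun hU => hJ.2.2 ⟨J ∪ K, hU, Finset.ssubset_union_of_disjoint hK hJK,
    hI ▸ Finset.ssubset_union_of_disjoint hL hJKL⟩

theorem IsDirectDescendant.union_ne_of_pairwise_disjoint (hI : IsIntervalSet n π I)
    (h₁ : IsDirectDescendant n π I J) (h₂ : IsDirectDescendant n π I K)
    (h₃ : IsDirectDescendant n π I L) (h₁₂ : Disjoint J K) (h₁₃ : Disjoint J L)
    (h₂₃ : Disjoint K L) : J ∪ K ∪ L ≠ I := by
  intro hJKL
  have hIval := hI.ordConnected
  have hIpos := hI.ordConnected_image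
  rw [← hJKL, Finset.coe_union, Finset.coe_union] at hIval hIpos
  rw [Set.image_union, Set.image_union] at hIpos
  have himage := fun {A B : Finset ℕ} (h : Disjoint A B) =>
    (Set.disjoint_image_iff π.symm.injective).mpr (Finset.disjoint_coe.mpr h)
  have hvals := h₁.1.ordConnected.two_unions_of_pairwise_disjoint h₂.1.ordConnected
    h₃.1.ordConnected hIval (Finset.disjoint_coe.mpr h₁₂) (Finset.disjoint_coe.mpr h₁₃)
    (Finset.disjoint_coe.mpr h₂₃)
  have hposs := h₁.1.ordConnected_image.two_unions_of_pairwise_disjoint h₂.1.ordConnected_image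
    h₃.1.ordConnected_image hIpos (himage h₁₂) (himage h₁₃) (himage h₂₃)
  have hpair : (((J : Set ℕ) ∪ K).OrdConnected ∧ (π.symm '' J ∪ π.symm '' K).OrdConnected) ∨
      (((J : Set ℕ) ∪ L).OrdConnected ∧ (π.symm '' J ∪ π.symm '' L).OrdConnected) ∨
      (((K : Set ℕ) ∪ L).OrdConnected ∧ (π.symm '' K ∪ π.symm '' L).OrdConnected) := by
    tauto
  rcases hpair with ⟨hv, hp⟩ | ⟨hv, hp⟩ | ⟨hv, hp⟩
  · exact h₁.not_isIntervalSet_union h₂.1.nonempty h₃.1.nonempty h₁₂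
      (Finset.disjoint_union_left.mpr ⟨h₁₃, h₂₃⟩) hJKL (h₁.1.union h₂.1 hv hp)
  · exact h₁.not_isIntervalSet_union h₃.1.nonempty h₂.1.nonempty h₁₃
      (Finset.disjoint_union_left.mpr ⟨h₁₂, h₂₃.symm⟩) (by rw [← hJKL, Finset.union_right_comm])
      (h₁.1.union h₃.1 hv hp)
  · exact h₂.not_isIntervalSet_union h₃.1.nonempty h₁.1.nonempty h₂₃
      (Finset.disjoint_union_left.mpr ⟨h₁₂.symm, h₁₃.symm⟩)
      (by rw [← hJKL, Finset.union_comm, ← Finset.union_assoc]) (h₂.1.union h₃.1 hv hp)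

end Intervals

theorem no_three_direct_descendants_general (n : ℕ) (π : Equiv.Perm ℕ)
    (I : Finset ℕ) (hI : IsIntervalSet n π I) :
    {J : Finset ℕ | IsIntervalSet n π J ∧ J ⊂ I ∧
      ¬ ∃ K : Finset ℕ, IsIntervalSet n π K ∧ J ⊂ K ∧ K ⊂ I}.ncard ≠ 3 := by
  change {J | IsDirectDescendant n π I J}.ncard ≠ 3
  intro h
  obtain ⟨J₁, J₂, J₃, h₁₂, h₁₃, h₂₃, hD⟩ := Set.ncard_eq_three.mp h
  have hmem : ∀ J, IsDirectDescendant n π I J ↔ J = J₁ ∨ J = J₂ ∨ J = J₃ := fun J => by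
    simpa using Set.ext_iff.mp hD J
  have h₁ := (hmem J₁).mpr (Or.inl rfl)
  have h₂ := (hmem J₂).mpr (Or.inr (Or.inl rfl))
  have h₃ := (hmem J₃).mpr (Or.inr (Or.inr rfl))
  have hcover : J₁ ∪ J₂ ∪ J₃ = I := by
    refine subset_antisymm (Finset.union_subset (Finset.union_subset h₁.2.1.subset
      h₂.2.1.subset) h₃.2.1.subset) fun v hv => ?_
    obtain ⟨J, hJ, hvJ⟩ := h₁.exists_isDirectDescendant_mem hI hv
    rcases (hmem J).mp hJ with rfl | rfl | rfl <;> simp [hvJ]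
  exact h₁.union_ne_of_pairwise_disjoint hI h₂ h₃ (h₁.disjoint_of_ne h₂ h₃ h₁₂ h₁₃ h₂₃)
    (h₁.disjoint_of_ne h₃ h₂ h₁₃ h₁₂ h₂₃.symm) (h₂.disjoint_of_ne h₃ h₁ h₂₃ h₁₂.symm h₁₃.symm)
    hcover

theorem no_three_direct_descendants (n : ℕ) (π : Equiv.Perm ℕ) (hπ : PermOn n π)
    (I : Finset ℕ) (hI : IsIntervalSet n π I) :
    {J : Finset ℕ | IsIntervalSet n π J ∧ J ⊂ I ∧
      ¬ ∃ K : Finset ℕ, IsIntervalSet n π K ∧ J ⊂ K ∧ K ⊂ I}.ncard ≠ 3 :=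
  no_three_direct_descendants_general n π I hI
end

section
/- Let π be a permutation of [n] and let 1 ≤ a ≤ b < c < d ≤ n be such that [a,b], [b+1,c], [c+1,d], and [a,d] are all intervals of π. Then at least one of [a,c] and [b+1,d] is also an interval of π. -/
/-!
The position sets of the three sub-blocks are pairwise disjoint intervals whose union is the
position interval of `[a,d]`, so by counting they tile it. In a tiling of an interval by three
intervals each tile is adjacent to another one; in particular the positions of `[b+1,c]` are
adjacent to those of `[a,b]` or of `[c+1,d]`, and the union of two adjacent intervals is an
interval.
-/

open Finset Function

namespace Nat

lemma Icc_union_Icc_succ {a b c : ℕ} (hab : a ≤ b + 1) (hbc : b ≤ c) :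
    Icc a b ∪ Icc (b + 1) c = Icc a c := by
  ext x
  simp only [mem_union, mem_Icc]
  omega

lemma disjoint_Icc_Icc_of_lt {a b c d : ℕ} (h : b < c) : Disjoint (Icc a b) (Icc c d) := by
  rw [disjoint_left]
  intro x
  simp only [mem_Icc]
  omega

lemma lt_or_lt_of_disjoint_Icc {p₁ q₁ p₂ q₂ : ℕ} (h₁ : p₁ ≤ q₁) (h₂ : p₂ ≤ q₂)
    (h : Disjoint (Icc p₁ q₁) (Icc p₂ q₂)) : q₁ < p₂ ∨ q₂ < p₁ := by
  by_contra! hlap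
  exact disjoint_left.mp h (show max p₁ p₂ ∈ Icc p₁ q₁ by simp only [mem_Icc]; omega)
    (by simp only [mem_Icc]; omega)

lemma Icc_union_Icc_of_adjacent {p₁ q₁ p₂ q₂ : ℕ} (h₁ : p₁ ≤ q₁) (h₂ : p₂ ≤ q₂)
    (h : q₁ + 1 = p₂ ∨ q₂ + 1 = p₁) : Icc p₁ q₁ ∪ Icc p₂ q₂ = Icc (min p₁ p₂) (max q₁ q₂) := by
  ext x
  simp only [mem_union, mem_Icc]
  omega

lemma exists_Icc_union_of_tiling {p₁ q₁ p₂ q₂ p₃ q₃ P Q : ℕ}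
    (h₁ : p₁ ≤ q₁) (h₂ : p₂ ≤ q₂) (h₃ : p₃ ≤ q₃)
    (d₁₂ : Disjoint (Icc p₁ q₁) (Icc p₂ q₂)) (d₁₃ : Disjoint (Icc p₁ q₁) (Icc p₃ q₃))
    (d₂₃ : Disjoint (Icc p₂ q₂) (Icc p₃ q₃))
    (hcover : Icc p₁ q₁ ∪ Icc p₂ q₂ ∪ Icc p₃ q₃ = Icc P Q) :
    (∃ e g, Icc p₁ q₁ ∪ Icc p₂ q₂ = Icc e g) ∨ (∃ e g, Icc p₂ q₂ ∪ Icc p₃ q₃ = Icc e g) := by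
  have hcard : Q + 1 - P = (q₁ + 1 - p₁) + (q₂ + 1 - p₂) + (q₃ + 1 - p₃) := by
    rw [← card_Icc, ← hcover, card_union_of_disjoint (disjoint_union_left.mpr ⟨d₁₃, d₂₃⟩),
      card_union_of_disjoint d₁₂, card_Icc, card_Icc, card_Icc]
  have s₁ := (Icc_subset_Icc_iff h₁).mp (hcover ▸ subset_union_left.trans subset_union_left)
  have s₂ := (Icc_subset_Icc_iff h₂).mp (hcover ▸ subset_union_right.trans subset_union_left)
  have s₃ := (Icc_subset_Icc_iff h₃).mp (hcover ▸ subset_union_right)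
  have o₁₂ := lt_or_lt_of_disjoint_Icc h₁ h₂ d₁₂
  have o₁₃ := lt_or_lt_of_disjoint_Icc h₁ h₃ d₁₃
  have o₂₃ := lt_or_lt_of_disjoint_Icc h₂ h₃ d₂₃
  have hadj : (q₁ + 1 = p₂ ∨ q₂ + 1 = p₁) ∨ (q₂ + 1 = p₃ ∨ q₃ + 1 = p₂) := by omega
  rcases hadj with h | h
  · exact Or.inl ⟨_, _, Icc_union_Icc_of_adjacent h₁ h₂ h⟩
  · exact Or.inr ⟨_, _, Icc_union_Icc_of_adjacent h₂ h₃ h⟩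

end Nat

lemma exists_image_Icc_eq_Icc_of_three_consecutive {f : ℕ → ℕ} (hf : Injective f)
    {a b c d p₁ q₁ p₂ q₂ p₃ q₃ P Q : ℕ} (hab : a ≤ b) (hbc : b < c) (hcd : c < d)
    (h₁ : (Icc a b).image f = Icc p₁ q₁) (h₂ : (Icc (b + 1) c).image f = Icc p₂ q₂)
    (h₃ : (Icc (c + 1) d).image f = Icc p₃ q₃) (h : (Icc a d).image f = Icc P Q) :
    (∃ e g, (Icc a c).image f = Icc e g) ∨ (∃ e g, (Icc (b + 1) d).image f = Icc e g) := by
  have hne : ∀ {s t u v}, s ≤ t → (Icc s t).image f = Icc u v → u ≤ v := fun hst hst' =>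
    nonempty_Icc.mp (hst' ▸ (nonempty_Icc.mpr hst).image f)
  have hdisj : ∀ {s t u v}, t < u → Disjoint ((Icc s t).image f) ((Icc u v).image f) :=
    fun htu => (disjoint_image hf).mpr (Nat.disjoint_Icc_Icc_of_lt htu)
  have hsplit : ∀ {s t u}, s ≤ t + 1 → t ≤ u →
      (Icc s u).image f = (Icc s t).image f ∪ (Icc (t + 1) u).image f := fun hst htu => by
    rw [← image_union, Nat.Icc_union_Icc_succ hst htu]
  have hac : (Icc a c).image f = Icc p₁ q₁ ∪ Icc p₂ q₂ := by
    rw [hsplit (t := b) (by omega) (by omega), h₁, h₂]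
  have hbd : (Icc (b + 1) d).image f = Icc p₂ q₂ ∪ Icc p₃ q₃ := by
    rw [hsplit (t := c) (by omega) (by omega), h₂, h₃]
  have hcover : Icc p₁ q₁ ∪ Icc p₂ q₂ ∪ Icc p₃ q₃ = Icc P Q := by
    rw [← hac, ← h₃, ← hsplit (by omega) (by omega), h]
  rw [hac, hbd]
  refine Nat.exists_Icc_union_of_tiling (hne hab h₁) (hne hbc h₂) (hne hcd h₃) ?_ ?_ ?_ hcover
  · rw [← h₁, ← h₂]; exact hdisj (by omega)
  · rw [← h₁, ← h₃]; exact hdisj (by omega)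
  · rw [← h₂, ← h₃]; exact hdisj (by omega)

theorem quotient_of_three_blocks_general (n : ℕ) (π : Equiv.Perm ℕ) (a b c d : ℕ)
    (h1 : IsBlock n π a b) (h2 : IsBlock n π (b + 1) c) (h3 : IsBlock n π (c + 1) d)
    (h4 : IsBlock n π a d) :
    IsBlock n π a c ∨ IsBlock n π (b + 1) d := by
  obtain ⟨ha, hab, -, _, _, hS₁⟩ := h1
  obtain ⟨-, hbc, -, _, _, hS₂⟩ := h2
  obtain ⟨-, hcd, hdn, _, _, hS₃⟩ := h3
  obtain ⟨-, -, -, _, _, hS⟩ := h4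
  rcases exists_image_Icc_eq_Icc_of_three_consecutive π.symm.injective hab hbc hcd
    hS₁ hS₂ hS₃ hS with hac | hbd
  · exact Or.inl ⟨ha, by omega, by omega, hac⟩
  · exact Or.inr ⟨by omega, by omega, hdn, hbd⟩

theorem quotient_of_three_blocks (n : ℕ) (π : Equiv.Perm ℕ) (hπ : PermOn n π)
    (a b c d : ℕ) (ha : 1 ≤ a) (hab : a ≤ b) (hbc : b < c) (hcd : c < d) (hdn : d ≤ n)
    (h1 : IsBlock n π a b) (h2 : IsBlock n π (b + 1) c) (h3 : IsBlock n π (c + 1) d)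
    (h4 : IsBlock n π a d) :
    IsBlock n π a c ∨ IsBlock n π (b + 1) d :=
  quotient_of_three_blocks_general n π a b c d h1 h2 h3 h4
end

section
/- Let π be a block-wise simple permutation of [n]; that is, there do not exist 1 ≤ a ≤ b < c ≤ n such that [a,b], [b+1,c], and [a,c] are all intervals of π. Then the intervals of π form a laminar family: any two intervals I and J of π satisfy I ⊆ J, J ⊆ I, or I ∩ J = ∅. Consequently, the interval poset of π is a tree. -/
open Finset Function

def BlockwiseSimple (n : ℕ) (π : Equiv.Perm ℕ) : Prop :=
  ¬ ∃ a b c : ℕ, 1 ≤ a ∧ a ≤ b ∧ b < c ∧ c ≤ n ∧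
    IsBlock n π a b ∧ IsBlock n π (b + 1) c ∧ IsBlock n π a c

lemma exists_Icc_eq_Icc_union_Icc {p q r s : ℕ} (h : (Icc p q ∩ Icc r s).Nonempty) :
    ∃ e f, Icc p q ∪ Icc r s = Icc e f := by
  obtain ⟨x, hx⟩ := h
  simp only [mem_inter, mem_Icc] at hx
  exact ⟨min p r, max q s, by ext v; simp only [mem_union, mem_Icc]; omega⟩

lemma exists_Icc_eq_Icc_sdiff_Icc {p q r s : ℕ} (h : (Icc r s \ Icc p q).Nonempty) :
    ∃ e f, Icc p q \ Icc r s = Icc e f := by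
  obtain ⟨z, hz⟩ := h
  simp only [mem_sdiff, mem_Icc] at hz
  by_cases hzp : z < p
  · exact ⟨max p (s + 1), q, by ext v; simp only [mem_sdiff, mem_Icc]; omega⟩
  by_cases hrp : r ≤ p
  · exact ⟨1, 0, by ext v; simp only [mem_sdiff, mem_Icc]; omega⟩
  · exact ⟨p, min q (r - 1), by ext v; simp only [mem_sdiff, mem_Icc]; omega⟩

section Image

variable {α : Type*} [DecidableEq α] {f : α → ℕ} {I J : Finset α}

lemma exists_image_union_eq_Icc (hI : ∃ p q, I.image f = Icc p q)
    (hJ : ∃ r s, J.image f = Icc r s) (hIJ : (I ∩ J).Nonempty) :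
    ∃ e g, (I ∪ J).image f = Icc e g := by
  obtain ⟨p, q, hp⟩ := hI
  obtain ⟨r, s, hr⟩ := hJ
  rw [image_union, hp, hr]
  exact exists_Icc_eq_Icc_union_Icc (hp ▸ hr ▸ (hIJ.image f).mono (image_inter_subset f I J))

lemma exists_image_sdiff_eq_Icc (hf : Injective f) (hI : ∃ p q, I.image f = Icc p q)
    (hJ : ∃ r s, J.image f = Icc r s) (hJI : (J \ I).Nonempty) :
    ∃ e g, (I \ J).image f = Icc e g := by
  obtain ⟨p, q, hp⟩ := hI
  obtain ⟨r, s, hr⟩ := hJ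
  rw [image_sdiff I J hf, hp, hr]
  exact exists_Icc_eq_Icc_sdiff_Icc
    (by rw [← hp, ← hr, ← image_sdiff J I hf]; exact hJI.image f)

end Image

section Blocks

variable {n : ℕ} {π : Equiv.Perm ℕ} {a b c d : ℕ}

lemma IsBlock.union_of_overlap (h₁ : IsBlock n π a b) (h₂ : IsBlock n π c d)
    (hac : a < c) (hcb : c ≤ b) (hbd : b < d) : IsBlock n π a d := by
  have hunion : Icc a d = Icc a b ∪ Icc c d := by
    ext v; simp only [mem_union, mem_Icc]; omega
  refine ⟨h₁.1, by omega, h₂.2.2.1, hunion ▸ exists_image_union_eq_Icc h₁.2.2.2 h₂.2.2.2 ⟨c, ?_⟩⟩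
  simp only [mem_inter, mem_Icc]; omega

lemma IsBlock.sdiff_of_overlap (h₁ : IsBlock n π a b) (h₂ : IsBlock n π c d)
    (hac : a < c) (hcb : c ≤ b) (hbd : b < d) : IsBlock n π a (c - 1) := by
  have hsdiff : Icc a (c - 1) = Icc a b \ Icc c d := by
    ext v; simp only [mem_sdiff, mem_Icc]; omega
  refine ⟨h₁.1, by omega, by have := h₁.2.2.1; omega,
    hsdiff ▸ exists_image_sdiff_eq_Icc π.symm.injective h₁.2.2.2 h₂.2.2.2 ⟨d, ?_⟩⟩
  simp only [mem_sdiff, mem_Icc]; omega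

lemma BlockwiseSimple.le_of_overlap (hπ : BlockwiseSimple n π) (h₁ : IsBlock n π a b)
    (h₂ : IsBlock n π c d) (hac : a < c) (hcb : c ≤ b) : d ≤ b := by
  by_contra! hbd
  have hc : c - 1 + 1 = c := by omega
  exact hπ ⟨a, c - 1, d, h₁.1, by omega, by omega, h₂.2.2.1,
    h₁.sdiff_of_overlap h₂ hac hcb hbd, hc ▸ h₂, h₁.union_of_overlap h₂ hac hcb hbd⟩

end Blocks

theorem blockwise_simple_laminar_general (n : ℕ) (π : Equiv.Perm ℕ)
    (hbs : ¬ ∃ a b c : ℕ, 1 ≤ a ∧ a ≤ b ∧ b < c ∧ c ≤ n ∧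
      IsBlock n π a b ∧ IsBlock n π (b + 1) c ∧ IsBlock n π a c) :
    ∀ I J : Finset ℕ, IsIntervalSet n π I → IsIntervalSet n π J →
      I ⊆ J ∨ J ⊆ I ∨ I ∩ J = ∅ := by
  rintro I J ⟨a, b, rfl, hI⟩ ⟨c, d, rfl, hJ⟩
  have hsimple : BlockwiseSimple n π := hbs
  have h₁ : a < c → c ≤ b → d ≤ b := hsimple.le_of_overlap hI hJ
  have h₂ : c < a → a ≤ d → b ≤ d := hsimple.le_of_overlap hJ hI
  rw [Icc_subset_Icc_iff hI.2.1, Icc_subset_Icc_iff hJ.2.1, ← coe_eq_empty, coe_inter, coe_Icc,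
    coe_Icc, Set.Icc_inter_Icc, Set.Icc_eq_empty_iff]
  omega

theorem blockwise_simple_laminar (n : ℕ) (π : Equiv.Perm ℕ) (hπ : PermOn n π)
    (hbs : ¬ ∃ a b c : ℕ, 1 ≤ a ∧ a ≤ b ∧ b < c ∧ c ≤ n ∧
      IsBlock n π a b ∧ IsBlock n π (b + 1) c ∧ IsBlock n π a c) :
    ∀ I J : Finset ℕ, IsIntervalSet n π I → IsIntervalSet n π J →
      I ⊆ J ∨ J ⊆ I ∨ I ∩ J = ∅ :=
  blockwise_simple_laminar_general n π hbs
end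

section
/- For n ∈ {4, 5, 6}, a permutation π of [n] is block-wise simple if and only if it is simple. That is, for such n: π has no proper interval if and only if there do not exist 1 ≤ a ≤ b < c ≤ n such that [a,b], [b+1,c], and [a,c] are all intervals of π. -/
/-!
Every proper block `[a,b]` of a permutation of `[1,n]`, `n ≤ 6`, has size `2`, `3`, `n - 2` or
`n - 1`. A block of size `2` or `n - 1` splits as a block plus a singleton. A block of size `3`
contains a block of size `2`, since the position of its middle value is adjacent to one of the
other two. For a block of size `n - 2`, look at the two values and the two positions it leaves
out: either both pairs are consecutive, giving a block of size `2`, or some left-out value next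
to the block sits at a left-out position next to its positions, giving a block of size `n - 1`.
-/

open Finset

variable {n a b c d u v x : ℕ} {π : Equiv.Perm ℕ}

def HasProperBlock (n : ℕ) (π : Equiv.Perm ℕ) : Prop :=
  ∃ a b : ℕ, IsBlock n π a b ∧ a < b ∧ ¬ (a = 1 ∧ b = n)

/-- A block of the form `p₁ ⊕ p₂` or `p₁ ⊖ p₂`. -/
def HasSplitBlock (n : ℕ) (π : Equiv.Perm ℕ) : Prop :=
  ∃ a b c : ℕ, 1 ≤ a ∧ a ≤ b ∧ b < c ∧ c ≤ n ∧
    IsBlock n π a b ∧ IsBlock n π (b + 1) c ∧ IsBlock n π a c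

theorem PermOn.image_symm_eq (hπ : PermOn n π) : (Icc 1 n).image π.symm = Icc 1 n := by
  have h : (Icc 1 n).image π = Icc 1 n :=
    eq_of_subset_of_card_le (image_subset_iff.2 hπ) (card_image_of_injective _ π.injective).ge
  nth_rewrite 1 [← h]
  simp [image_image]

theorem PermOn.symm_mem_Icc (hπ : PermOn n π) (hv : v ∈ Icc 1 n) : π.symm v ∈ Icc 1 n :=
  hπ.image_symm_eq ▸ mem_image_of_mem _ hv

theorem isBlock_singleton (ha : 1 ≤ a) (han : a ≤ n) : IsBlock n π a a :=
  ⟨ha, le_rfl, han, π.symm a, π.symm a, by simp⟩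

theorem PermOn.isBlock_one (hπ : PermOn n π) (hn : 1 ≤ n) : IsBlock n π 1 n :=
  ⟨le_rfl, hn, le_rfl, 1, n, hπ.image_symm_eq⟩

theorem IsBlock.exists_image_symm_eq (h : IsBlock n π a b) :
    ∃ c, (Icc a b).image π.symm = Icc c (c + (b - a)) := by
  obtain ⟨-, hab, -, c, d, him⟩ := h
  have hcard := congrArg card him
  rw [card_image_of_injective _ π.symm.injective, Nat.card_Icc, Nat.card_Icc] at hcard
  exact ⟨c, by rw [him, show d = c + (b - a) by omega]⟩

theorem IsBlock.image_symm_subset (hπ : PermOn n π) (h : IsBlock n π a b) :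
    (Icc a b).image π.symm ⊆ Icc 1 n :=
  hπ.image_symm_eq ▸ image_subset_image (Icc_subset_Icc h.1 h.2.2.1)

theorem symm_mem_Icc_iff (him : (Icc a b).image π.symm = Icc c d) :
    π.symm v ∈ Icc c d ↔ v ∈ Icc a b := by
  rw [← him, π.symm.injective.mem_finset_image]

theorem isBlock_of_insert {a' b' : ℕ} (ha' : 1 ≤ a') (hab' : a' ≤ b') (hb' : b' ≤ n)
    (hI : Icc a' b' = insert x (Icc a b)) (him : (Icc a b).image π.symm = Icc c d)
    (hcd : c ≤ d) (hx : π.symm x + 1 = c ∨ π.symm x = d + 1) : IsBlock n π a' b' := by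
  refine ⟨ha', hab', hb', ?_⟩
  rw [hI, image_insert, him]
  rcases hx with hx | hx
  · exact ⟨π.symm x, d, by ext; simp; omega⟩
  · exact ⟨c, π.symm x, by ext; simp; omega⟩

theorem isBlock_of_adjacent (hu : 1 ≤ u) (hv : v = u + 1) (hvn : v ≤ n)
    (hσ : π.symm v + 1 = π.symm u ∨ π.symm v = π.symm u + 1) : IsBlock n π u v :=
  isBlock_of_insert (a := u) (b := u) hu (by omega) hvn (by ext; simp; omega) (by simp) le_rfl hσ

theorem IsBlock.hasSplitBlock_of_eq_add_one (h : IsBlock n π a b) (hb : b = a + 1) :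
    HasSplitBlock n π := by
  obtain ⟨ha, -, hbn, -⟩ := id h
  exact ⟨a, a, b, ha, le_rfl, by omega, hbn, isBlock_singleton ha (by omega),
    hb ▸ isBlock_singleton (by omega) (hb ▸ hbn), h⟩

theorem IsBlock.hasSplitBlock_of_add_two_eq (hπ : PermOn n π) (h : IsBlock n π a b)
    (hab : b + 2 = a + n) : HasSplitBlock n π := by
  obtain ⟨ha, hab', hbn, -⟩ := id h
  obtain rfl | rfl : a = 1 ∨ a = 2 := by omega
  · obtain rfl : n = b + 1 := by omega
    exact ⟨1, b, b + 1, le_rfl, hab', by omega, le_rfl, h, isBlock_singleton (by omega) le_rfl,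
      hπ.isBlock_one (by omega)⟩
  · obtain rfl : n = b := by omega
    exact ⟨1, 1, n, le_rfl, le_rfl, by omega, le_rfl, isBlock_singleton le_rfl (by omega), h,
      hπ.isBlock_one (by omega)⟩

theorem IsBlock.hasSplitBlock_of_eq_add_two (h : IsBlock n π a b) (hb : b = a + 2) :
    HasSplitBlock n π := by
  subst hb
  obtain ⟨c, him⟩ := h.exists_image_symm_eq
  rw [Nat.add_sub_cancel_left] at him
  have h₀ := (symm_mem_Icc_iff him).2 (by simp : a ∈ Icc a (a + 2))
  have h₁ := (symm_mem_Icc_iff him).2 (by simp : a + 1 ∈ Icc a (a + 2))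
  have h₂ := (symm_mem_Icc_iff him).2 (by simp : a + 2 ∈ Icc a (a + 2))
  have h₀₁ : π.symm a ≠ π.symm (a + 1) := π.symm.injective.ne (by omega)
  have h₁₂ : π.symm (a + 1) ≠ π.symm (a + 2) := π.symm.injective.ne (by omega)
  have h₀₂ : π.symm a ≠ π.symm (a + 2) := π.symm.injective.ne (by omega)
  simp only [mem_Icc] at h₀ h₁ h₂
  obtain ⟨ha, -, hn, -⟩ := h
  by_cases hσ : π.symm (a + 1) + 1 = π.symm a ∨ π.symm (a + 1) = π.symm a + 1
  · exact (isBlock_of_adjacent ha rfl (by omega) hσ).hasSplitBlock_of_eq_add_one rfl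
  · exact (isBlock_of_adjacent (u := a + 1) (v := a + 2) (by omega) rfl hn (by omega)
      ).hasSplitBlock_of_eq_add_one rfl

theorem IsBlock.hasSplitBlock_of_add_three_eq (hπ : PermOn n π) (h : IsBlock n π a b)
    (hab : b + 3 = a + n) : HasSplitBlock n π := by
  obtain ⟨ha, hab', hbn, -⟩ := id h
  obtain ⟨c, him⟩ := h.exists_image_symm_eq
  have hc := h.image_symm_subset hπ (him ▸ left_mem_Icc.2 (Nat.le_add_right c _))
  have hd := h.image_symm_subset hπ (him ▸ right_mem_Icc.2 (Nat.le_add_right c _))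
  simp only [mem_Icc] at hc hd
  have hout (v : ℕ) (hv : 1 ≤ v ∧ v ≤ n) (hv' : v < a ∨ b < v) :
      1 ≤ π.symm v ∧ π.symm v ≤ n ∧ (π.symm v < c ∨ c + (b - a) < π.symm v) := by
    have h₁ := hπ.symm_mem_Icc (mem_Icc.2 hv)
    have h₂ : π.symm v ∉ Icc c (c + (b - a)) := by
      rw [symm_mem_Icc_iff him, mem_Icc]
      omega
    simp only [mem_Icc, not_and_or, not_le] at h₁ h₂
    omega
  have of_left (x : ℕ) (hx : x + 1 = a) (hx₁ : 1 ≤ x)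
      (hσ : π.symm x + 1 = c ∨ π.symm x = c + (b - a) + 1) : HasSplitBlock n π :=
    (isBlock_of_insert hx₁ (by omega) hbn (by ext; simp; omega) him (by omega) hσ
      ).hasSplitBlock_of_add_two_eq hπ (by omega)
  have of_right (hb₁ : b + 1 ≤ n)
      (hσ : π.symm (b + 1) + 1 = c ∨ π.symm (b + 1) = c + (b - a) + 1) : HasSplitBlock n π :=
    (isBlock_of_insert ha (by omega) hb₁ (by ext; simp; omega) him (by omega) hσ
      ).hasSplitBlock_of_add_two_eq hπ (by omega)
  obtain rfl | rfl | rfl : a = 1 ∨ a = 2 ∨ a = 3 := by omega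
  · have h₁ := hout (b + 1) (by omega) (by omega)
    have h₂ := hout (b + 2) (by omega) (by omega)
    have h₁₂ : π.symm (b + 1) ≠ π.symm (b + 2) := π.symm.injective.ne (by omega)
    by_cases hσ : π.symm (b + 1) + 1 = c ∨ π.symm (b + 1) = c + (b - 1) + 1
    · exact of_right (by omega) hσ
    · exact (isBlock_of_adjacent (u := b + 1) (v := b + 2) (by omega) rfl (by omega) (by omega)
        ).hasSplitBlock_of_eq_add_one rfl
  · have h₁ := hout 1 (by omega) (by omega)
    have h₂ := hout (b + 1) (by omega) (by omega)
    have h₁₂ : π.symm 1 ≠ π.symm (b + 1) := π.symm.injective.ne (by omega)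
    by_cases hσ : π.symm 1 + 1 = c ∨ π.symm 1 = c + (b - 2) + 1
    · exact of_left 1 rfl le_rfl hσ
    · exact of_right (by omega) (by omega)
  · have h₁ := hout 1 (by omega) (by omega)
    have h₂ := hout 2 (by omega) (by omega)
    have h₁₂ : π.symm 1 ≠ π.symm 2 := π.symm.injective.ne (by omega)
    by_cases hσ : π.symm 2 + 1 = c ∨ π.symm 2 = c + (b - 3) + 1
    · exact of_left 2 rfl (by omega) hσ
    · exact (isBlock_of_adjacent (u := 1) (v := 2) le_rfl rfl (by omega) (by omega)
        ).hasSplitBlock_of_eq_add_one rfl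

theorem HasProperBlock.hasSplitBlock (hπ : PermOn n π) (hn : n ≤ 6) (h : HasProperBlock n π) :
    HasSplitBlock n π := by
  obtain ⟨a, b, hb, hlt, hne⟩ := h
  obtain ⟨ha, -, hbn, -⟩ := id hb
  obtain hab | hab | hab | hab : b = a + 1 ∨ b = a + 2 ∨ b + 2 = a + n ∨ b + 3 = a + n := by
    omega
  · exact hb.hasSplitBlock_of_eq_add_one hab
  · exact hb.hasSplitBlock_of_eq_add_two hab
  · exact hb.hasSplitBlock_of_add_two_eq hπ hab
  · exact hb.hasSplitBlock_of_add_three_eq hπ hab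

theorem HasSplitBlock.hasProperBlock (hn : 3 ≤ n) (h : HasSplitBlock n π) :
    HasProperBlock n π := by
  obtain ⟨a, b, c, ha, hab, hbc, hcn, hl, hr, hlr⟩ := h
  obtain hab | rfl := hab.lt_or_eq
  · exact ⟨a, b, hl, hab, by omega⟩
  · obtain hac | hac := (Nat.succ_le_of_lt hbc).eq_or_lt
    · exact ⟨a, c, hlr, hbc, by omega⟩
    · exact ⟨a + 1, c, hr, hac, by omega⟩

theorem blockwise_simple_iff_simple_small (n : ℕ) (hn : n = 4 ∨ n = 5 ∨ n = 6)
    (π : Equiv.Perm ℕ) (hπ : PermOn n π) :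
    (¬ ∃ a b : ℕ, IsBlock n π a b ∧ a < b ∧ ¬ (a = 1 ∧ b = n)) ↔
    (¬ ∃ a b c : ℕ, 1 ≤ a ∧ a ≤ b ∧ b < c ∧ c ≤ n ∧
      IsBlock n π a b ∧ IsBlock n π (b + 1) c ∧ IsBlock n π a c) :=
  not_congr ⟨HasProperBlock.hasSplitBlock hπ (by omega), HasSplitBlock.hasProperBlock (by omega)⟩
end

section
/- Let π be a permutation of [n]. The intervals of π are pairwise nested or disjoint (equivalently, the interval poset of π is a tree) if and only if there do not exist 1 ≤ a ≤ x < y < b ≤ n such that [a,x], [x+1,y], [y+1,b], [a,y], [x+1,b], and [a,b] are all intervals of π (i.e., π contains no interval of the form p₁ ⊕ p₂ ⊕ p₃ or p₁ ⊖ p₂ ⊖ p₃). -/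
/-!
Two intervals of `π` that are neither nested nor disjoint cross: `[a,b]` and `[c,d]` with
`a < c ≤ b < d`. Since `π⁻¹` is injective, taking positions commutes with `∩`, `∪` and `\`,
and in `ℕ` these operations keep intervals intervals (the union when they meet, the difference
when the subtracted interval sticks out). Hence `[a,c-1]`, `[c,b]`, `[b+1,d]` and `[a,d]` are
intervals of `π` as well, which is a triple sum with `x = c - 1`, `y = b`. Conversely the
intervals `[a,y]` and `[x+1,b]` of a triple sum cross.
-/

open Finset

lemma Finset.Icc_inter_Icc {α : Type*} [LinearOrder α] [LocallyFiniteOrder α]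
    {a₁ b₁ a₂ b₂ : α} :
    Icc a₁ b₁ ∩ Icc a₂ b₂ = Icc (max a₁ a₂) (min b₁ b₂) :=
  coe_injective <| by push_cast; exact Set.Icc_inter_Icc

def IsIcc (s : Finset ℕ) : Prop :=
  ∃ c d, s = Icc c d

namespace IsIcc

variable {s t : Finset ℕ}

lemma inter (hs : IsIcc s) (ht : IsIcc t) : IsIcc (s ∩ t) := by
  obtain ⟨c, d, rfl⟩ := hs
  obtain ⟨e, f, rfl⟩ := ht
  exact ⟨max c e, min d f, Icc_inter_Icc⟩

lemma union (hs : IsIcc s) (ht : IsIcc t) (hst : (s ∩ t).Nonempty) : IsIcc (s ∪ t) := by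
  obtain ⟨c, d, rfl⟩ := hs
  obtain ⟨e, f, rfl⟩ := ht
  obtain ⟨z, hz⟩ := hst
  simp only [mem_inter, mem_Icc] at hz
  exact ⟨min c e, max d f, by ext; simp only [mem_union, mem_Icc]; omega⟩

lemma sdiff (hs : IsIcc s) (ht : IsIcc t) (hts : ¬ t ⊆ s) : IsIcc (s \ t) := by
  obtain ⟨c, d, rfl⟩ := hs
  obtain ⟨e, f, rfl⟩ := ht
  obtain ⟨w, hwt, hws⟩ := not_subset.mp hts
  simp only [mem_Icc] at hwt hws
  by_cases hec : e ≤ c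
  · exact ⟨max c (f + 1), d, by ext; simp only [mem_sdiff, mem_Icc]; omega⟩
  · exact ⟨c, min d (e - 1), by ext; simp only [mem_sdiff, mem_Icc]; omega⟩

end IsIcc

lemma Icc_not_nested_or_disjoint_iff {a b c d : ℕ} (hab : a ≤ b) (hcd : c ≤ d) :
    ¬ (Icc a b ⊆ Icc c d ∨ Icc c d ⊆ Icc a b ∨ Icc a b ∩ Icc c d = ∅) ↔
      (a < c ∧ c ≤ b ∧ b < d) ∨ (c < a ∧ a ≤ d ∧ d < b) := by
  simp only [Icc_subset_Icc_iff hab, Icc_subset_Icc_iff hcd, Icc_inter_Icc, Icc_eq_empty_iff]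
  omega

lemma isIcc_image_Icc_of_crossing {f : ℕ → ℕ} (hf : Function.Injective f) {a b c d : ℕ}
    (hab : IsIcc ((Icc a b).image f)) (hcd : IsIcc ((Icc c d).image f))
    (hac : a < c) (hcb : c ≤ b) (hbd : b < d) :
    IsIcc ((Icc a (c - 1)).image f) ∧ IsIcc ((Icc c b).image f) ∧
      IsIcc ((Icc (b + 1) d).image f) ∧ IsIcc ((Icc a d).image f) := by
  have not_nested {u v w z : ℕ} (huv : u ≤ v) (hwz : w ≤ z) (hout : u < w ∨ z < v) :
      ¬ (Icc u v).image f ⊆ (Icc w z).image f := by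
    rw [image_subset_image_iff hf, Icc_subset_Icc_iff huv]
    omega
  have hmeet : ((Icc a b).image f ∩ (Icc c d).image f).Nonempty := by
    rw [← image_inter _ _ hf, Icc_inter_Icc]
    exact (nonempty_Icc.mpr (by omega)).image f
  refine ⟨?_, ?_, ?_, ?_⟩
  · rw [show Icc a (c - 1) = Icc a b \ Icc c d by ext; simp only [mem_sdiff, mem_Icc]; omega,
      image_sdiff _ _ hf]
    exact hab.sdiff hcd (not_nested (by omega) (by omega) (by omega))
  · rw [show Icc c b = Icc a b ∩ Icc c d by ext; simp only [mem_inter, mem_Icc]; omega,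
      image_inter _ _ hf]
    exact hab.inter hcd
  · rw [show Icc (b + 1) d = Icc c d \ Icc a b by ext; simp only [mem_sdiff, mem_Icc]; omega,
      image_sdiff _ _ hf]
    exact hcd.sdiff hab (not_nested (by omega) (by omega) (by omega))
  · rw [show Icc a d = Icc a b ∪ Icc c d by ext; simp only [mem_union, mem_Icc]; omega,
      image_union]
    exact hab.union hcd hmeet

lemma IsBlock.exists_triple_sum_of_crossing {n : ℕ} {π : Equiv.Perm ℕ} {a b c d : ℕ}
    (hab : IsBlock n π a b) (hcd : IsBlock n π c d) (hac : a < c) (hcb : c ≤ b) (hbd : b < d) :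
    ∃ a x y b : ℕ, 1 ≤ a ∧ a ≤ x ∧ x < y ∧ y < b ∧ b ≤ n ∧
      IsBlock n π a x ∧ IsBlock n π (x + 1) y ∧ IsBlock n π (y + 1) b ∧
      IsBlock n π a y ∧ IsBlock n π (x + 1) b ∧ IsBlock n π a b := by
  obtain ⟨ha, -, -, hP⟩ := hab
  obtain ⟨-, -, hd, hQ⟩ := hcd
  obtain ⟨hleft, hmid, hright, hall⟩ :=
    isIcc_image_Icc_of_crossing π.symm.injective hP hQ hac hcb hbd
  have hc : c - 1 + 1 = c := by omega
  refine ⟨a, c - 1, b, d, ha, by omega, by omega, hbd, hd, ⟨ha, by omega, by omega, hleft⟩, ?_,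
    ⟨by omega, by omega, hd, hright⟩, ⟨ha, by omega, by omega, hP⟩, ?_, ⟨ha, by omega, hd, hall⟩⟩
  · rw [hc]; exact ⟨by omega, hcb, by omega, hmid⟩
  · rw [hc]; exact ⟨by omega, by omega, hd, hQ⟩

theorem tree_iff_no_triple_sum_general (n : ℕ) (π : Equiv.Perm ℕ) :
    (∀ I J : Finset ℕ, IsIntervalSet n π I → IsIntervalSet n π J →
      I ⊆ J ∨ J ⊆ I ∨ I ∩ J = ∅) ↔
    ¬ ∃ a x y b : ℕ, 1 ≤ a ∧ a ≤ x ∧ x < y ∧ y < b ∧ b ≤ n ∧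
      IsBlock n π a x ∧ IsBlock n π (x + 1) y ∧ IsBlock n π (y + 1) b ∧
      IsBlock n π a y ∧ IsBlock n π (x + 1) b ∧ IsBlock n π a b := by
  constructor
  · rintro htree ⟨a, x, y, b, -, hax, hxy, hyb, -, -, -, -, hay, hxb, -⟩
    exact (Icc_not_nested_or_disjoint_iff hay.2.1 hxb.2.1).mpr (Or.inl ⟨by omega, hxy, hyb⟩)
      (htree _ _ ⟨a, y, rfl, hay⟩ ⟨x + 1, b, rfl, hxb⟩)
  · rintro hno _ _ ⟨a, b, rfl, hab⟩ ⟨c, d, rfl, hcd⟩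
    by_contra hcross
    rcases (Icc_not_nested_or_disjoint_iff hab.2.1 hcd.2.1).mp hcross with
      ⟨hac, hcb, hbd⟩ | ⟨hca, had, hdb⟩
    · exact hno (hab.exists_triple_sum_of_crossing hcd hac hcb hbd)
    · exact hno (hcd.exists_triple_sum_of_crossing hab hca had hdb)

theorem tree_iff_no_triple_sum (n : ℕ) (π : Equiv.Perm ℕ) (hπ : PermOn n π) :
    (∀ I J : Finset ℕ, IsIntervalSet n π I → IsIntervalSet n π J →
      I ⊆ J ∨ J ⊆ I ∨ I ∩ J = ∅) ↔
    ¬ ∃ a x y b : ℕ, 1 ≤ a ∧ a ≤ x ∧ x < y ∧ y < b ∧ b ≤ n ∧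
      IsBlock n π a x ∧ IsBlock n π (x + 1) y ∧ IsBlock n π (y + 1) b ∧
      IsBlock n π a y ∧ IsBlock n π (x + 1) b ∧ IsBlock n π a b :=
  tree_iff_no_triple_sum_general n π
end
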